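/- Let 1 < α < 2 and let g : ℝ → ℝ be measurable such that |g(x+h) − g(x)| ≤ 2|h|(|x|^{−3/2} 1_{|x|<1} + |x|^{−1} 1_{|x|≥1}) for all x ≠ 0 and all 0 < h ≤ 1, and |g(x)| ≤ 4/|x| for all x ≠ 0. Then there is a constant K > 0, depending only on α, such that for all positive integers ω, Ω, E_g(ω,Ω) ≤ K (ω^{−(1−α/2)} + Ω^{−(α−1)}). -/

import Mathlib

open MeasureTheory Filter Topology Set

/-- The discretization-plus-truncation simulation error `E_g(ω,Ω)`. -/
noncomputable def Eg (α : ℝ) (g : ℝ → ℝ) (ω Ω : ℕ) : ℝ :=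
  (∑ j ∈ Finset.Icc (-(ω * Ω : ℤ) + 1) 0,
      ∫ s in Set.Icc (((j : ℝ) - 1) / ω) ((j : ℝ) / ω), |g (((j : ℝ) - 1) / ω) - g s| ^ α)
  + (∑ j ∈ Finset.Icc (1 : ℤ) (ω * Ω : ℤ),
      ∫ s in Set.Icc (((j : ℝ) - 1) / ω) ((j : ℝ) / ω), |g ((j : ℝ) / ω) - g s| ^ α)
  + (∫ s in Set.Iic (-(Ω : ℝ)), |g s| ^ α)
  + ∫ s in Set.Ici (Ω : ℝ), |g s| ^ α

noncomputable def phiK (t : ℝ) : ℝ := if t < 1 then t ^ (-(3/2) : ℝ) else t⁻¹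

lemma phiK_nonneg {t : ℝ} (ht : 0 ≤ t) : 0 ≤ phiK t := by
  unfold phiK; split
  · exact Real.rpow_nonneg ht _
  · exact inv_nonneg.2 ht

lemma phiK_anti {s t : ℝ} (hs : 0 < s) (hst : s ≤ t) : phiK t ≤ phiK s := by
  unfold phiK
  rcases lt_or_ge t 1 with h1 | h1
  · rw [if_pos h1, if_pos (lt_of_le_of_lt hst h1)]
    exact Real.rpow_le_rpow_of_nonpos hs hst (by norm_num)
  · rw [if_neg (not_lt.2 h1)]
    rcases lt_or_ge s 1 with h2 | h2
    · rw [if_pos h2]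
      calc t⁻¹ ≤ 1 := inv_le_one_of_one_le₀ h1
        _ ≤ s ^ (-(3/2) : ℝ) :=
          Real.one_le_rpow_of_pos_of_le_one_of_nonpos hs h2.le (by norm_num)
    · rw [if_neg (not_lt.2 h2)]
      exact inv_anti₀ hs hst

lemma bracket_eq (x : ℝ) :
    (if |x| < 1 then |x| ^ (-(3/2) : ℝ) else 0) + (if 1 ≤ |x| then |x|⁻¹ else 0) = phiK |x| := by
  unfold phiK
  rcases lt_or_ge |x| 1 with h | h
  · rw [if_pos h, if_pos h, if_neg (not_le.2 h), add_zero]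
  · rw [if_neg (not_lt.2 h), if_neg (not_lt.2 h), if_pos h, zero_add]

lemma phiK_rpow_le {t α : ℝ} (ht : 0 < t) (hα : 0 ≤ α) :
    phiK t ^ α ≤ t ^ (-(3 * α / 2)) + t ^ (-α) := by
  unfold phiK; split
  · have h1 : (t ^ (-(3/2) : ℝ)) ^ α = t ^ (-(3 * α / 2)) := by
      rw [← Real.rpow_mul ht.le]; ring_nf
    rw [h1]
    have := Real.rpow_nonneg ht.le (-α)
    linarith
  · have h1 : (t⁻¹) ^ α = t ^ (-α) := by
      rw [← Real.rpow_neg_one t, ← Real.rpow_mul ht.le]; ring_nf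
    rw [h1]
    have := Real.rpow_nonneg ht.le (-(3 * α / 2))
    linarith

section main

variable {α : ℝ} {g : ℝ → ℝ}

/-- dyadic smallness estimate near zero -/
lemma gsmall_aux
    (hinc : ∀ x : ℝ, x ≠ 0 → ∀ h : ℝ, 0 < h → h ≤ 1 →
      |g (x + h) - g x| ≤
        2 * |h| * ((if |x| < 1 then |x| ^ (-(3/2) : ℝ) else 0) +
                   (if 1 ≤ |x| then |x|⁻¹ else 0)))
    (hbd : ∀ x : ℝ, x ≠ 0 → |g x| ≤ 4 / |x|) :
    ∀ n : ℕ, ∀ y : ℝ, y ≠ 0 → (1/2:ℝ)^n ≤ |y| → |y| ≤ 1 →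
      |g y| ≤ 4 + 7 * |y| ^ (-(1/2) : ℝ) := by
  intro n
  induction n with
  | zero =>
    intro y hy h1 h2
    have hy1 : |y| = 1 := le_antisymm h2 (by simpa using h1)
    have := hbd y hy
    rw [hy1] at this ⊢
    norm_num at this ⊢
    linarith
  | succ n ih =>
    intro y hy h1 h2
    rcases le_or_gt ((1/2:ℝ)^n) |y| with h | h
    · exact ih y hy h h2
    have hy0 : 0 < |y| := abs_pos.2 hy
    have hlt1 : |y| < 1 := lt_of_lt_of_le h (pow_le_one₀ (by norm_num) (by norm_num))
    have h2y0 : (2:ℝ)*y ≠ 0 := by simp [hy]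
    have habs2 : |2*y| = 2*|y| := by rw [abs_mul]; norm_num
    have hpowhalf : ((1:ℝ)/2)^n ≤ |2*y| := by
      rw [habs2]; rw [pow_succ] at h1; linarith
    have hr2 : (0:ℝ) < |2*y| := by rw [habs2]; linarith
    have hg2 : |g (2*y)| ≤ 4 + 7 * |2*y| ^ (-(1/2) : ℝ) := by
      rcases le_or_gt (|2*y|) 1 with hc | hc
      · exact ih (2*y) h2y0 hpowhalf hc
      · have := hbd (2*y) h2y0
        have h4 : 4 / |2*y| ≤ 4 := by
          rw [div_le_iff₀ hr2]; nlinarith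
        have := Real.rpow_nonneg (abs_nonneg (2*y)) (-(1/2))
        linarith
    have key : |y| * |y| ^ (-(3/2) : ℝ) = |y| ^ (-(1/2) : ℝ) := by
      nth_rewrite 1 [← Real.rpow_one |y|]
      rw [← Real.rpow_add hy0]; norm_num
    have hrp32 : (0:ℝ) ≤ |y| ^ (-(3/2) : ℝ) := Real.rpow_nonneg (abs_nonneg y) _
    have hstep : |g (2*y) - g y| ≤ 2 * |y| ^ (-(1/2) : ℝ) := by
      rcases lt_or_gt_of_ne hy with hneg | hpos
      · -- y < 0 : step from x = 2y with h = -y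
        have hb := hinc (2*y) h2y0 (-y) (by linarith) (by rw [abs_of_neg hneg] at h2; linarith)
        have hx : (2*y) + (-y) = y := by ring
        rw [hx, abs_neg] at hb
        have hbr : ((if |2*y| < 1 then |2*y| ^ (-(3/2) : ℝ) else 0) +
            (if 1 ≤ |2*y| then |2*y|⁻¹ else 0)) ≤ |y| ^ (-(3/2) : ℝ) := by
          rcases lt_or_ge (|2*y|) 1 with hc | hc
          · rw [if_pos hc, if_neg (not_le.2 hc), add_zero]
            exact Real.rpow_le_rpow_of_nonpos hy0 (by rw [habs2]; linarith) (by norm_num)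
          · rw [if_neg (not_lt.2 hc), if_pos hc, zero_add]
            calc |2*y|⁻¹ ≤ 1 := inv_le_one_of_one_le₀ hc
              _ ≤ |y| ^ (-(3/2) : ℝ) :=
                Real.one_le_rpow_of_pos_of_le_one_of_nonpos hy0 h2 (by norm_num)
        rw [abs_sub_comm]
        calc |g y - g (2*y)| ≤ 2 * |y| * _ := hb
          _ ≤ 2 * |y| * |y| ^ (-(3/2) : ℝ) := by nlinarith
          _ = 2 * |y| ^ (-(1/2) : ℝ) := by rw [mul_assoc, key]
      · -- y > 0 : step from x = y with h = y
        have hb := hinc y hy y (by linarith [abs_of_pos hpos]) (by rw [abs_of_pos hpos] at h2; linarith)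
        have hx : y + y = 2*y := by ring
        rw [hx] at hb
        rw [if_pos hlt1, if_neg (not_le.2 hlt1), add_zero] at hb
        calc |g (2*y) - g y| ≤ 2 * |y| * |y| ^ (-(3/2) : ℝ) := hb
          _ = 2 * |y| ^ (-(1/2) : ℝ) := by rw [mul_assoc, key]
    -- combine
    have hsplit : |2*y| ^ (-(1/2) : ℝ) = 2 ^ (-(1/2) : ℝ) * |y| ^ (-(1/2) : ℝ) := by
      rw [habs2, Real.mul_rpow (by norm_num) (abs_nonneg y)]
    have h2half : (2:ℝ) ^ (-(1/2) : ℝ) ≤ 5/7 := by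
      rw [show (-(1/2) : ℝ) = -(1/2 : ℝ) from rfl, Real.rpow_neg (by norm_num),
        ← Real.sqrt_eq_rpow]
      have hs2 : (0:ℝ) < Real.sqrt 2 := Real.sqrt_pos.2 (by norm_num)
      have hsq : Real.sqrt 2 ^ 2 = 2 := Real.sq_sqrt (by norm_num)
      rw [inv_le_iff_one_le_mul₀ hs2]
      nlinarith
    have hrp12 : (0:ℝ) ≤ |y| ^ (-(1/2) : ℝ) := Real.rpow_nonneg (abs_nonneg y) _
    calc |g y| ≤ |g (2*y)| + |g (2*y) - g y| := by
          have := abs_sub_abs_le_abs_sub (g y) (g (2*y))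
          have := abs_sub_comm (g y) (g (2*y))
          nlinarith [abs_sub_abs_le_abs_sub (g y) (g (2*y)), (abs_sub_comm (g y) (g (2*y))).le]
      _ ≤ 4 + 7 * |2*y| ^ (-(1/2) : ℝ) + 2 * |y| ^ (-(1/2) : ℝ) := by linarith
      _ ≤ 4 + 7 * |y| ^ (-(1/2) : ℝ) := by
          rw [hsplit]; nlinarith

lemma gsmall
    (hinc : ∀ x : ℝ, x ≠ 0 → ∀ h : ℝ, 0 < h → h ≤ 1 →
      |g (x + h) - g x| ≤
        2 * |h| * ((if |x| < 1 then |x| ^ (-(3/2) : ℝ) else 0) +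
                   (if 1 ≤ |x| then |x|⁻¹ else 0)))
    (hbd : ∀ x : ℝ, x ≠ 0 → |g x| ≤ 4 / |x|) :
    ∀ y : ℝ, y ≠ 0 → |y| ≤ 1 → |g y| ≤ 11 * |y| ^ (-(1/2) : ℝ) := by
  intro y hy h1
  have hy0 : 0 < |y| := abs_pos.2 hy
  obtain ⟨n, hn⟩ := exists_pow_lt_of_lt_one hy0 (by norm_num : (1/2:ℝ) < 1)
  have h2 := gsmall_aux hinc hbd n y hy hn.le h1
  have h3 : 1 ≤ |y| ^ (-(1/2) : ℝ) :=
    Real.one_le_rpow_of_pos_of_le_one_of_nonpos hy0 h1 (by norm_num)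
  linarith

/-- bound on a generic interval to the right of 0, comparison at the right endpoint -/
lemma pos_interval (hα : 0 ≤ α)
    (hinc : ∀ x : ℝ, x ≠ 0 → ∀ h : ℝ, 0 < h → h ≤ 1 →
      |g (x + h) - g x| ≤
        2 * |h| * ((if |x| < 1 then |x| ^ (-(3/2) : ℝ) else 0) +
                   (if 1 ≤ |x| then |x|⁻¹ else 0)))
    {L R : ℝ} (h0 : 0 < L) (hLR : L < R) (hh : R - L ≤ 1) :
    ∫ s in Icc L R, |g R - g s| ^ α ≤ (R - L) * (2 * (R - L) * phiK L) ^ α := by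
  have hphi : 0 ≤ phiK L := phiK_nonneg h0.le
  have hconst : 0 ≤ 2 * (R - L) * phiK L := by nlinarith
  have key : ∀ s ∈ Icc L R, ‖|g R - g s| ^ α‖ ≤ (2 * (R - L) * phiK L) ^ α := by
    intro s hs
    rw [Real.norm_of_nonneg (Real.rpow_nonneg (abs_nonneg _) _)]
    apply Real.rpow_le_rpow (abs_nonneg _) _ hα
    rcases eq_or_lt_of_le hs.2 with rfl | hsR
    · simpa using hconst
    · have hs0 : 0 < s := h0.trans_le hs.1
      have hb := hinc s hs0.ne' (R - s) (by linarith) (by have := hs.1; linarith)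
      rw [show s + (R - s) = R by ring, bracket_eq, abs_of_pos hs0] at hb
      have h1 : |R - s| ≤ R - L := by rw [abs_of_pos (by linarith)]; linarith [hs.1]
      have h2 : phiK s ≤ phiK L := phiK_anti h0 hs.1
      have h3 : 0 ≤ phiK s := phiK_nonneg hs0.le
      calc |g R - g s| ≤ 2 * |R - s| * phiK s := hb
        _ ≤ 2 * (R - L) * phiK L := by nlinarith [abs_nonneg (R - s)]
  have hmeas : volume (Icc L R) < ⊤ := by
    rw [Real.volume_Icc]; exact ENNReal.ofReal_lt_top
  have := norm_setIntegral_le_of_norm_le_const hmeas key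
  calc ∫ s in Icc L R, |g R - g s| ^ α ≤ ‖∫ s in Icc L R, |g R - g s| ^ α‖ :=
        le_abs_self _
    _ ≤ (2 * (R - L) * phiK L) ^ α * (volume (Icc L R)).toReal := this
    _ = (R - L) * (2 * (R - L) * phiK L) ^ α := by
        rw [Real.volume_Icc, ENNReal.toReal_ofReal (by linarith)]; ring

/-- bound on a generic interval to the left of 0, comparison at the left endpoint -/
lemma neg_interval (hα : 0 ≤ α)
    (hinc : ∀ x : ℝ, x ≠ 0 → ∀ h : ℝ, 0 < h → h ≤ 1 →
      |g (x + h) - g x| ≤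
        2 * |h| * ((if |x| < 1 then |x| ^ (-(3/2) : ℝ) else 0) +
                   (if 1 ≤ |x| then |x|⁻¹ else 0)))
    {L R : ℝ} (hR0 : R < 0) (hLR : L < R) (hh : R - L ≤ 1) :
    ∫ s in Icc L R, |g L - g s| ^ α ≤ (R - L) * (2 * (R - L) * phiK (-R)) ^ α := by
  have hphi : 0 ≤ phiK (-R) := phiK_nonneg (by linarith)
  have hconst : 0 ≤ 2 * (R - L) * phiK (-R) := by nlinarith
  have key : ∀ s ∈ Icc L R, ‖|g L - g s| ^ α‖ ≤ (2 * (R - L) * phiK (-R)) ^ α := by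
    intro s hs
    rw [Real.norm_of_nonneg (Real.rpow_nonneg (abs_nonneg _) _)]
    apply Real.rpow_le_rpow (abs_nonneg _) _ hα
    rcases eq_or_lt_of_le hs.1 with rfl | hLs
    · simpa using hconst
    · have hL0 : L < 0 := by linarith
      have hb := hinc L (by linarith) (s - L) (by linarith) (by have := hs.2; linarith)
      rw [show L + (s - L) = s by ring, bracket_eq, abs_of_neg hL0] at hb
      have h1 : |s - L| ≤ R - L := by rw [abs_of_pos (by linarith)]; linarith [hs.2]
      have h2 : phiK (-L) ≤ phiK (-R) := phiK_anti (by linarith) (by linarith)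
      have h3 : 0 ≤ phiK (-L) := phiK_nonneg (by linarith)
      calc |g L - g s| = |g s - g L| := abs_sub_comm _ _
        _ ≤ 2 * |s - L| * phiK (-L) := hb
        _ ≤ 2 * (R - L) * phiK (-R) := by nlinarith [abs_nonneg (s - L)]
  have hmeas : volume (Icc L R) < ⊤ := by
    rw [Real.volume_Icc]; exact ENNReal.ofReal_lt_top
  have := norm_setIntegral_le_of_norm_le_const hmeas key
  calc ∫ s in Icc L R, |g L - g s| ^ α ≤ ‖∫ s in Icc L R, |g L - g s| ^ α‖ :=
        le_abs_self _
    _ ≤ (2 * (R - L) * phiK (-R)) ^ α * (volume (Icc L R)).toReal := this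
    _ = (R - L) * (2 * (R - L) * phiK (-R)) ^ α := by
        rw [Real.volume_Icc, ENNReal.toReal_ofReal (by linarith)]; ring

/-- bound for the cell adjacent to zero (for an arbitrary function with the
smallness property). -/
lemma first_cell (hα1 : 1 < α) (hα2 : α < 2) {f : ℝ → ℝ}
    (hf : ∀ y : ℝ, 0 < y → y ≤ 1 → |f y| ≤ 11 * y ^ (-(1/2) : ℝ))
    {b : ℝ} (hb0 : 0 < b) (hb1 : b ≤ 1) :
    ∫ s in Icc 0 b, |f b - f s| ^ α ≤ 22 ^ α * (b ^ (1 - α/2) / (1 - α/2)) := by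
  have hα0 : (0:ℝ) ≤ α := by linarith
  set r : ℝ := -(α/2) with hr_def
  have hr : (-1:ℝ) < r := by rw [hr_def]; linarith
  have hii : IntervalIntegrable (fun s : ℝ => s ^ r) volume 0 b :=
    intervalIntegral.intervalIntegrable_rpow' hr
  have hIoc : IntegrableOn (fun s : ℝ => s ^ r) (Ioc 0 b) volume :=
    (intervalIntegrable_iff_integrableOn_Ioc_of_le hb0.le).1 hii
  have hInt : IntegrableOn (fun s : ℝ => s ^ r) (Icc 0 b) volume := by
    rwa [integrableOn_Icc_iff_integrableOn_Ioc]
  have hval : ∫ s in Icc 0 b, s ^ r = b ^ (r + 1) / (r + 1) := by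
    rw [integral_Icc_eq_integral_Ioc, ← intervalIntegral.integral_of_le hb0.le,
      integral_rpow (Or.inl hr), Real.zero_rpow (show r + 1 ≠ 0 from by rw [hr_def]; intro h; linarith [h])]
    ring
  have h0ae : ∀ᵐ s : ℝ ∂(volume.restrict (Icc 0 b)), s ≠ 0 := by
    apply ae_restrict_of_ae
    rw [ae_iff]
    simp only [not_not]
    rw [show {a : ℝ | a = 0} = {(0:ℝ)} from by ext x; simp]
    exact measure_singleton 0
  have hmono := integral_mono_of_nonneg (f := fun s => |f b - f s| ^ α)
    (g := fun s => 22 ^ α * s ^ r) (μ := volume.restrict (Icc 0 b))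
    (Eventually.of_forall fun s => Real.rpow_nonneg (abs_nonneg _) _)
    (hInt.const_mul _) ?_
  · have : ∫ s in Icc 0 b, 22 ^ α * s ^ r = 22 ^ α * (b ^ (r+1) / (r+1)) := by
      rw [integral_const_mul, hval]
    rw [this] at hmono
    rw [show (1 - α/2 : ℝ) = r + 1 by rw [hr_def]; ring]
    exact hmono
  · filter_upwards [ae_restrict_mem measurableSet_Icc, h0ae] with s hs hs0
    have hspos : 0 < s := lt_of_le_of_ne hs.1 (Ne.symm hs0)
    have hsb : s ≤ b := hs.2
    have hfb : |f b| ≤ 11 * b ^ (-(1/2) : ℝ) := hf b hb0 hb1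
    have hfs : |f s| ≤ 11 * s ^ (-(1/2) : ℝ) := hf s hspos (hsb.trans hb1)
    have hmon : b ^ (-(1/2) : ℝ) ≤ s ^ (-(1/2) : ℝ) :=
      Real.rpow_le_rpow_of_nonpos hspos hsb (by norm_num)
    have habs : |f b - f s| ≤ 22 * s ^ (-(1/2) : ℝ) := by
      calc |f b - f s| ≤ |f b| + |f s| := abs_sub _ _
        _ ≤ 22 * s ^ (-(1/2) : ℝ) := by linarith
    calc |f b - f s| ^ α ≤ (22 * s ^ (-(1/2) : ℝ)) ^ α :=
          Real.rpow_le_rpow (abs_nonneg _) habs hα0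
      _ = 22 ^ α * s ^ r := by
          rw [Real.mul_rpow (by norm_num) (Real.rpow_nonneg hspos.le _),
            ← Real.rpow_mul hspos.le]
          congr 1
          rw [hr_def]; ring

/-- tail bound (for an arbitrary function bounded by `4/s`). -/
lemma tail_cell (hα1 : 1 < α) {f : ℝ → ℝ}
    (hf : ∀ y : ℝ, 0 < y → |f y| ≤ 4 / y) {c : ℝ} (hc : 0 < c) :
    ∫ s in Ioi c, |f s| ^ α ≤ 4 ^ α * (c ^ (1 - α) / (α - 1)) := by
  have hα0 : (0:ℝ) ≤ α := by linarith
  have hInt : IntegrableOn (fun s : ℝ => s ^ (-α)) (Ioi c) volume :=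
    integrableOn_Ioi_rpow_of_lt (by linarith) hc
  have hmono := integral_mono_of_nonneg (f := fun s => |f s| ^ α)
    (g := fun s => 4 ^ α * s ^ (-α)) (μ := volume.restrict (Ioi c))
    (Eventually.of_forall fun s => Real.rpow_nonneg (abs_nonneg _) _)
    (hInt.const_mul _) ?_
  · have hval : ∫ s in Ioi c, 4 ^ α * s ^ (-α) = 4 ^ α * (c ^ (1-α) / (α-1)) := by
      rw [integral_const_mul, integral_Ioi_rpow_of_lt (by linarith) hc]
      rw [show (-α + 1 : ℝ) = -(α - 1) by ring, show (1 - α : ℝ) = -(α - 1) by ring,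
        div_neg, neg_div, neg_neg]
    rw [hval] at hmono
    exact hmono
  · filter_upwards [ae_restrict_mem measurableSet_Ioi] with s hs
    have hspos : 0 < s := hc.trans hs
    calc |f s| ^ α ≤ (4 / s) ^ α := Real.rpow_le_rpow (abs_nonneg _) (hf s hspos) hα0
      _ = 4 ^ α * s ^ (-α) := by
          rw [Real.div_rpow (by norm_num) hspos.le, Real.rpow_neg hspos.le, div_eq_mul_inv]

end main

lemma cell_sum_bound {W α : ℝ} (hW1 : 1 ≤ W) (hα0 : 0 ≤ α) {k : ℕ} (hk : 1 ≤ k) :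
    (1/W) * (2 * (1/W) * phiK ((k:ℝ)/W)) ^ α
      ≤ 2 ^ α * W ^ (α/2 - 1) * (((k:ℝ)) ^ (-(3*α/2)) + ((k:ℝ)) ^ (-α)) := by
  have hW0 : (0:ℝ) < W := lt_of_lt_of_le one_pos hW1
  have hk0 : (0:ℝ) < (k:ℝ) := by exact_mod_cast hk
  have ht0 : (0:ℝ) < (k:ℝ)/W := div_pos hk0 hW0
  have hsplit : ∀ e : ℝ, ((k:ℝ)/W) ^ e = (k:ℝ) ^ e * W ^ (-e) := by
    intro e
    rw [div_eq_mul_inv, Real.mul_rpow hk0.le (inv_nonneg.2 hW0.le),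
      Real.inv_rpow hW0.le, ← Real.rpow_neg hW0.le]
  have h2W : (2 * (1/W) * phiK ((k:ℝ)/W)) ^ α
      = 2 ^ α * (1/W) ^ α * phiK ((k:ℝ)/W) ^ α := by
    rw [Real.mul_rpow (by positivity) (phiK_nonneg ht0.le),
      Real.mul_rpow (by norm_num) (by positivity)]
  have hphi := phiK_rpow_le ht0 hα0
  have h1W : (1/W : ℝ) = W ^ (-1 : ℝ) := by rw [Real.rpow_neg_one, one_div]
  have h1Wα : ((1/W : ℝ)) ^ α = W ^ (-α) := by
    rw [one_div, Real.inv_rpow hW0.le, ← Real.rpow_neg hW0.le]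
  have hWnonneg : (0:ℝ) ≤ W ^ (-1:ℝ) * W ^ (-α) := by positivity
  calc (1/W) * (2 * (1/W) * phiK ((k:ℝ)/W)) ^ α
      = 2 ^ α * (W ^ (-1:ℝ) * W ^ (-α) * phiK ((k:ℝ)/W) ^ α) := by
        rw [h2W, h1Wα, h1W]; ring
    _ ≤ 2 ^ α * (W ^ (-1:ℝ) * W ^ (-α) * (((k:ℝ)/W) ^ (-(3*α/2)) + ((k:ℝ)/W) ^ (-α))) := by
        have h2 : (0:ℝ) ≤ 2 ^ α := by positivity
        nlinarith [mul_le_mul_of_nonneg_left hphi hWnonneg]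
    _ ≤ 2 ^ α * W ^ (α/2 - 1) * (((k:ℝ)) ^ (-(3*α/2)) + ((k:ℝ)) ^ (-α)) := by
        rw [hsplit, hsplit]
        have hWmul : ∀ a b : ℝ, W ^ a * W ^ b = W ^ (a+b) :=
          fun a b => (Real.rpow_add hW0 a b).symm
        have e1 : W ^ (-1:ℝ) * W ^ (-α) * ((k:ℝ) ^ (-(3*α/2)) * W ^ (-(-(3*α/2))))
            = W ^ (-1 + -α + 3*α/2) * (k:ℝ) ^ (-(3*α/2)) := by
          rw [neg_neg]
          calc W ^ (-1:ℝ) * W ^ (-α) * ((k:ℝ) ^ (-(3*α/2)) * W ^ (3*α/2))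
              = W ^ (-1:ℝ) * W ^ (-α) * W ^ (3*α/2) * (k:ℝ) ^ (-(3*α/2)) := by ring
            _ = W ^ (-1 + -α + 3*α/2) * (k:ℝ) ^ (-(3*α/2)) := by rw [hWmul, hWmul]
        have e2 : W ^ (-1:ℝ) * W ^ (-α) * ((k:ℝ) ^ (-α) * W ^ (-(-α)))
            = W ^ (-1 : ℝ) * (k:ℝ) ^ (-α) := by
          rw [neg_neg]
          calc W ^ (-1:ℝ) * W ^ (-α) * ((k:ℝ) ^ (-α) * W ^ α)
              = W ^ (-1:ℝ) * (W ^ (-α) * W ^ α) * (k:ℝ) ^ (-α) := by ring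
            _ = W ^ (-1 : ℝ) * (k:ℝ) ^ (-α) := by
                rw [hWmul, show -α + α = (0:ℝ) by ring, Real.rpow_zero, mul_one]
        have hle1 : W ^ (-1 + -α + 3*α/2 : ℝ) ≤ W ^ (α/2 - 1) :=
          Real.rpow_le_rpow_of_exponent_le hW1 (by linarith)
        have hle2 : W ^ (-1 : ℝ) ≤ W ^ (α/2 - 1) :=
          Real.rpow_le_rpow_of_exponent_le hW1 (by linarith)
        have p1 : (0:ℝ) ≤ (k:ℝ) ^ (-(3*α/2)) := Real.rpow_nonneg hk0.le _
        have p2 : (0:ℝ) ≤ (k:ℝ) ^ (-α) := Real.rpow_nonneg hk0.le _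
        have p3 : (0:ℝ) ≤ 2 ^ α := by positivity
        calc 2 ^ α * (W ^ (-1:ℝ) * W ^ (-α) *
              ((k:ℝ) ^ (-(3*α/2)) * W ^ (-(-(3*α/2))) + (k:ℝ) ^ (-α) * W ^ (-(-α))))
            = 2 ^ α * (W ^ (-1 + -α + 3*α/2) * (k:ℝ) ^ (-(3*α/2))
                + W ^ (-1:ℝ) * (k:ℝ) ^ (-α)) := by rw [mul_add, e1, e2]
          _ ≤ 2 ^ α * (W ^ (α/2 - 1) * (k:ℝ) ^ (-(3*α/2))
                + W ^ (α/2 - 1) * (k:ℝ) ^ (-α)) := by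
              gcongr
          _ = 2 ^ α * W ^ (α/2 - 1) * (((k:ℝ)) ^ (-(3*α/2)) + ((k:ℝ)) ^ (-α)) := by ring

lemma setIntegral_comp_neg_Icc (a b : ℝ) (f : ℝ → ℝ) :
    (∫ x in Icc a b, f (-x)) = ∫ x in Icc (-b) (-a), f x := by
  have A : MeasurableEmbedding fun x : ℝ => -x :=
    (Homeomorph.neg ℝ).isClosedEmbedding.measurableEmbedding
  have := A.setIntegral_map (μ := volume) f (Icc (-b) (-a))
  rw [Measure.map_neg_eq_self (volume : Measure ℝ)] at this
  simp_rw [this, neg_preimage, neg_Icc, neg_neg]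

lemma sum_Icc_int_eq (N : ℕ) (F : ℤ → ℝ) :
    ∑ j ∈ Finset.Icc (1:ℤ) (N:ℤ), F j = ∑ k ∈ Finset.range N, F ((k:ℤ)+1) := by
  induction N with
  | zero => simp
  | succ n ih =>
    have h : Finset.Icc (1:ℤ) ((n+1:ℕ):ℤ) = insert ((n:ℤ)+1) (Finset.Icc 1 (n:ℤ)) := by
      ext x; simp only [Finset.mem_Icc, Finset.mem_insert]; omega
    rw [h, Finset.sum_insert (by simp), Finset.sum_range_succ, ih]; ring

lemma sum_Icc_int_neg_eq (N : ℕ) (F : ℤ → ℝ) :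
    ∑ j ∈ Finset.Icc (-(N:ℤ)+1) 0, F j = ∑ k ∈ Finset.range N, F (-(k:ℤ)) := by
  induction N with
  | zero => simp
  | succ n ih =>
    have h : Finset.Icc (-((n+1:ℕ):ℤ)+1) 0 = insert (-(n:ℤ)) (Finset.Icc (-(n:ℤ)+1) 0) := by
      ext x; simp only [Finset.mem_Icc, Finset.mem_insert]; omega
    rw [h, Finset.sum_insert (by simp), Finset.sum_range_succ, ih]; ring

set_option maxHeartbeats 1000000

/-- direct simulation error estimate of Section 5.3 for the
kernel of Example 3.2. -/
theorem stmt_18 (α : ℝ) (hα1 : 1 < α) (hα2 : α < 2) (g : ℝ → ℝ) (hmg : Measurable g)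
    (hinc : ∀ x : ℝ, x ≠ 0 → ∀ h : ℝ, 0 < h → h ≤ 1 →
      |g (x + h) - g x| ≤
        2 * |h| * ((if |x| < 1 then |x| ^ (-(3/2) : ℝ) else 0) +
                   (if 1 ≤ |x| then |x|⁻¹ else 0)))
    (hbd : ∀ x : ℝ, x ≠ 0 → |g x| ≤ 4 / |x|) :
    ∃ K > (0:ℝ), ∀ ω Ω : ℕ, 0 < ω → 0 < Ω →
      Eg α g ω Ω ≤ K * ((ω : ℝ) ^ (-(1 - α / 2)) + (Ω : ℝ) ^ (-(α - 1))) := by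
  have hα0 : (0:ℝ) ≤ α := by linarith
  have hsum1 : Summable (fun n : ℕ => ((n:ℝ)) ^ (-(3*α/2))) :=
    Real.summable_nat_rpow.mpr (by linarith)
  have hsum2 : Summable (fun n : ℕ => ((n:ℝ)) ^ (-α)) :=
    Real.summable_nat_rpow.mpr (by linarith)
  set S₁ := ∑' n : ℕ, ((n:ℝ)) ^ (-(3*α/2)) with hS1
  set S₂ := ∑' n : ℕ, ((n:ℝ)) ^ (-α) with hS2
  have hS1nn : 0 ≤ S₁ := tsum_nonneg fun n => Real.rpow_nonneg (Nat.cast_nonneg n) _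
  have hS2nn : 0 ≤ S₂ := tsum_nonneg fun n => Real.rpow_nonneg (Nat.cast_nonneg n) _
  set Cn : ℝ := 22 ^ α / (1 - α/2) with hCn
  set Cs : ℝ := 2 ^ α * (S₁ + S₂) with hCs
  set Ct : ℝ := 4 ^ α / (α - 1) with hCt
  have hCnnn : 0 ≤ Cn := div_nonneg (by positivity) (by linarith)
  have hCsnn : 0 ≤ Cs := mul_nonneg (by positivity) (by linarith)
  have hCtnn : 0 ≤ Ct := div_nonneg (by positivity) (by linarith)
  refine ⟨2*Cn + 2*Cs + 2*Ct + 1, by linarith, ?_⟩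
  intro ω Ω hω hΩ
  unfold Eg
  set W : ℝ := (ω:ℝ) with hW
  have hW1 : (1:ℝ) ≤ W := by rw [hW]; exact_mod_cast hω
  have hW0 : (0:ℝ) < W := by linarith
  have hΩ1 : (1:ℝ) ≤ (Ω:ℝ) := by exact_mod_cast hΩ
  have hΩ0 : (0:ℝ) < (Ω:ℝ) := by linarith
  set X : ℝ := W ^ (α/2 - 1) with hX
  set Y : ℝ := (Ω:ℝ) ^ (-(α - 1)) with hY
  have hXnn : 0 ≤ X := Real.rpow_nonneg hW0.le _
  have hYnn : 0 ≤ Y := Real.rpow_nonneg hΩ0.le _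
  have hXeq : W ^ (-(1 - α/2)) = X := by rw [hX]; congr 1; ring
  have hgs := gsmall hinc hbd
  have hgs' : ∀ y : ℝ, 0 < y → y ≤ 1 → |g y| ≤ 11 * y ^ (-(1/2) : ℝ) := by
    intro y h1 h2
    have := hgs y h1.ne' (by rwa [abs_of_pos h1])
    rwa [abs_of_pos h1] at this
  have hgs'' : ∀ y : ℝ, 0 < y → y ≤ 1 → |g (-y)| ≤ 11 * y ^ (-(1/2) : ℝ) := by
    intro y h1 h2
    have := hgs (-y) (by simp [h1.ne']) (by rwa [abs_neg, abs_of_pos h1])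
    rwa [abs_neg, abs_of_pos h1] at this
  set N : ℕ := ω * Ω with hN
  have hNpos : 0 < N := Nat.mul_pos hω hΩ
  have hb0 : (0:ℝ) < 1/W := by positivity
  have hb1 : (1:ℝ)/W ≤ 1 := by rw [div_le_one hW0]; exact hW1
  have hfirst_aux : 22 ^ α * ((1/W) ^ (1 - α/2) / (1 - α/2)) = Cn * X := by
    rw [hCn, hX, one_div, Real.inv_rpow hW0.le, ← Real.rpow_neg hW0.le,
      show -(1 - α/2) = α/2 - 1 by ring]
    ring
  have hcast : ((ω : ℤ) * (Ω : ℤ) : ℤ) = ((N:ℕ):ℤ) := by rw [hN]; push_cast; ring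
  -- the common bound function for the sums
  have hEsum : ∑ k ∈ Finset.range N, ((if k = 0 then Cn * X else 0)
        + 2 ^ α * X * (((k:ℝ)) ^ (-(3*α/2)) + ((k:ℝ)) ^ (-α))) ≤ (Cn + Cs) * X := by
    rw [Finset.sum_add_distrib, Finset.sum_ite_eq' (Finset.range N) 0 (fun _ => Cn * X),
      if_pos (Finset.mem_range.2 hNpos), ← Finset.mul_sum, Finset.sum_add_distrib]
    have h1 : ∑ k ∈ Finset.range N, ((k:ℝ)) ^ (-(3*α/2)) ≤ S₁ :=
      Summable.sum_le_tsum _ (fun i _ => Real.rpow_nonneg (Nat.cast_nonneg i) _) hsum1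
    have h2 : ∑ k ∈ Finset.range N, ((k:ℝ)) ^ (-α) ≤ S₂ :=
      Summable.sum_le_tsum _ (fun i _ => Real.rpow_nonneg (Nat.cast_nonneg i) _) hsum2
    have h3 : (0:ℝ) ≤ 2 ^ α * X := by positivity
    have : 2 ^ α * X * (∑ k ∈ Finset.range N, ((k:ℝ)) ^ (-(3*α/2))
        + ∑ k ∈ Finset.range N, ((k:ℝ)) ^ (-α)) ≤ 2 ^ α * X * (S₁ + S₂) := by
      apply mul_le_mul_of_nonneg_left _ h3
      linarith
    rw [hCs]
    nlinarith [this]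
  -- positive-side sum
  have hPos : (∑ j ∈ Finset.Icc (1 : ℤ) ((ω : ℤ) * (Ω : ℤ)),
      ∫ s in Set.Icc (((j : ℝ) - 1) / W) ((j : ℝ) / W), |g ((j : ℝ) / W) - g s| ^ α)
      ≤ (Cn + Cs) * X := by
    rw [hcast, sum_Icc_int_eq N (fun j => ∫ s in Set.Icc (((j : ℝ) - 1) / W) ((j : ℝ) / W),
      |g ((j : ℝ) / W) - g s| ^ α)]
    refine le_trans (Finset.sum_le_sum ?_) hEsum
    intro k _
    have hcast2 : ((((k:ℤ)+1 : ℤ)):ℝ) = (k:ℝ)+1 := by push_cast; ring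
    rw [hcast2]
    rcases Nat.eq_zero_or_pos k with rfl | hk
    · rw [if_pos rfl]
      have hz1 : ((0:ℕ):ℝ) + 1 - 1 = 0 := by norm_num
      have hz2 : ((0:ℕ):ℝ) + 1 = 1 := by norm_num
      rw [hz1, hz2]
      have hstep := first_cell hα1 hα2 hgs' hb0 hb1
      rw [show (0:ℝ)/W = 0 by ring]
      calc (∫ s in Set.Icc (0:ℝ) (1/W), |g (1/W) - g s| ^ α)
          ≤ 22 ^ α * ((1/W) ^ (1 - α/2) / (1 - α/2)) := hstep
        _ = Cn * X := hfirst_aux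
        _ ≤ Cn * X + 2 ^ α * X * (((0:ℕ):ℝ) ^ (-(3*α/2)) + ((0:ℕ):ℝ) ^ (-α)) := by
            have : (0:ℝ) ≤ 2 ^ α * X * (((0:ℕ):ℝ) ^ (-(3*α/2)) + ((0:ℕ):ℝ) ^ (-α)) := by
              positivity
            linarith
    · rw [if_neg hk.ne']
      have hkR : (0:ℝ) < (k:ℝ) := by exact_mod_cast hk
      have hLeq : ((k:ℝ) + 1 - 1)/W = (k:ℝ)/W := by ring
      rw [hLeq]
      have hRL : ((k:ℝ)+1)/W - (k:ℝ)/W = 1/W := by ring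
      have hLR : (k:ℝ)/W < ((k:ℝ)+1)/W := by
        have : (0:ℝ) < 1/W := hb0
        linarith
      have hstep := pos_interval hα0 hinc (div_pos hkR hW0) hLR (by rw [hRL]; exact hb1)
      rw [hRL] at hstep
      calc (∫ s in Set.Icc ((k:ℝ)/W) (((k:ℝ)+1)/W), |g (((k:ℝ)+1)/W) - g s| ^ α)
          ≤ (1/W) * (2 * (1/W) * phiK ((k:ℝ)/W)) ^ α := hstep
        _ ≤ 2 ^ α * W ^ (α/2 - 1) * (((k:ℝ)) ^ (-(3*α/2)) + ((k:ℝ)) ^ (-α)) :=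
            cell_sum_bound hW1 hα0 hk
        _ ≤ 0 + 2 ^ α * X * (((k:ℝ)) ^ (-(3*α/2)) + ((k:ℝ)) ^ (-α)) := by
            rw [← hX, zero_add]
  -- negative-side sum
  have hNeg : (∑ j ∈ Finset.Icc (-((ω : ℤ) * (Ω : ℤ)) + 1) 0,
      ∫ s in Set.Icc (((j : ℝ) - 1) / W) ((j : ℝ) / W), |g (((j : ℝ) - 1) / W) - g s| ^ α)
      ≤ (Cn + Cs) * X := by
    rw [hcast, sum_Icc_int_neg_eq N (fun j => ∫ s in Set.Icc (((j : ℝ) - 1) / W) ((j : ℝ) / W),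
      |g (((j : ℝ) - 1) / W) - g s| ^ α)]
    refine le_trans (Finset.sum_le_sum ?_) hEsum
    intro k _
    have hcast2 : (((-(k:ℤ) : ℤ)):ℝ) = -(k:ℝ) := by push_cast; ring
    rw [hcast2]
    rcases Nat.eq_zero_or_pos k with rfl | hk
    · rw [if_pos rfl]
      have hz1 : -((0:ℕ):ℝ) - 1 = -(1:ℝ) := by norm_num
      have hz2 : -((0:ℕ):ℝ) = 0 := by norm_num
      rw [hz1, hz2]
      have he1 : (-(1:ℝ))/W = -(1/W) := by ring
      have he2 : (0:ℝ)/W = -(0:ℝ) := by ring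
      rw [he1, he2]
      have hsub := setIntegral_comp_neg_Icc 0 (1/W) (fun s => |g (-(1/W)) - g s| ^ α)
      rw [← hsub]
      have hstep := first_cell hα1 hα2 hgs'' hb0 hb1
      calc (∫ x in Set.Icc (0:ℝ) (1/W), |g (-(1/W)) - g (-x)| ^ α)
          ≤ 22 ^ α * ((1/W) ^ (1 - α/2) / (1 - α/2)) := hstep
        _ = Cn * X := hfirst_aux
        _ ≤ Cn * X + 2 ^ α * X * (((0:ℕ):ℝ) ^ (-(3*α/2)) + ((0:ℕ):ℝ) ^ (-α)) := by
            have : (0:ℝ) ≤ 2 ^ α * X * (((0:ℕ):ℝ) ^ (-(3*α/2)) + ((0:ℕ):ℝ) ^ (-α)) := by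
              positivity
            linarith
    · rw [if_neg hk.ne']
      have hkR : (0:ℝ) < (k:ℝ) := by exact_mod_cast hk
      have hR0 : (-(k:ℝ))/W < 0 := by
        apply div_neg_of_neg_of_pos _ hW0; linarith
      have hRL : (-(k:ℝ))/W - (-(k:ℝ) - 1)/W = 1/W := by ring
      have hLR : (-(k:ℝ) - 1)/W < (-(k:ℝ))/W := by
        have : (0:ℝ) < 1/W := hb0
        linarith
      have hstep := neg_interval hα0 hinc hR0 hLR (by rw [hRL]; exact hb1)
      rw [hRL, show -((-(k:ℝ))/W) = (k:ℝ)/W by ring] at hstep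
      calc (∫ s in Set.Icc ((-(k:ℝ) - 1)/W) ((-(k:ℝ))/W), |g ((-(k:ℝ) - 1)/W) - g s| ^ α)
          ≤ (1/W) * (2 * (1/W) * phiK ((k:ℝ)/W)) ^ α := hstep
        _ ≤ 2 ^ α * W ^ (α/2 - 1) * (((k:ℝ)) ^ (-(3*α/2)) + ((k:ℝ)) ^ (-α)) :=
            cell_sum_bound hW1 hα0 hk
        _ ≤ 0 + 2 ^ α * X * (((k:ℝ)) ^ (-(3*α/2)) + ((k:ℝ)) ^ (-α)) := by
            rw [← hX, zero_add]
  -- tails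
  have hTailPos : (∫ s in Set.Ici ((Ω:ℝ)), |g s| ^ α) ≤ Ct * Y := by
    rw [integral_Ici_eq_integral_Ioi]
    refine le_trans (tail_cell hα1 (f := g) ?_ hΩ0) ?_
    · intro y hy
      have := hbd y hy.ne'
      rwa [abs_of_pos hy] at this
    · rw [hCt, hY, show (1-α:ℝ) = -(α-1) by ring]
      apply le_of_eq; ring
  have hTailNeg : (∫ s in Set.Iic (-(Ω:ℝ)), |g s| ^ α) ≤ Ct * Y := by
    rw [← integral_comp_neg_Ioi (Ω:ℝ) (fun s => |g s| ^ α)]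
    refine le_trans (tail_cell hα1 (f := fun y => g (-y)) ?_ hΩ0) ?_
    · intro y hy
      have := hbd (-y) (by simp [hy.ne'])
      rwa [abs_neg, abs_of_pos hy] at this
    · rw [hCt, hY, show (1-α:ℝ) = -(α-1) by ring]
      apply le_of_eq; ring
  rw [hXeq]
  have hfin : (2*Cn + 2*Cs) * X + (2*Ct) * Y
      ≤ (2*Cn + 2*Cs + 2*Ct + 1) * (X + Y) := by
    have t1 : 0 ≤ (2*Ct+1)*X := mul_nonneg (by linarith) hXnn
    have t2 : 0 ≤ (2*Cn+2*Cs+1)*Y := mul_nonneg (by linarith) hYnn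
    nlinarith [t1, t2]
  linarith [hPos, hNeg, hTailPos, hTailNeg, hfin]
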